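/- arXiv:1503.03004 — 2 statements merged into one kernel-verified Lean document; each statement's English description precedes it below -/
import Mathlib

section
/- For A ∈ ℝ^{m×r} with rank r and skinny SVD A = QΣSᵀ (Q ∈ St_{m,r}, S ∈ O_r, Σ diagonal positive), the matrix U = QSᵀ satisfies tr(UᵀA) ≥ tr(WᵀA) for every W ∈ St_{m,r}. -/
open Matrix

/-- For `A ∈ ℝ^{m×r}` with rank `r` and skinny SVD `A = QΣSᵀ` (`Q ∈ St_{m,r}`, `S ∈ O_r`,
`Σ` diagonal positive), the matrix `U = QSᵀ` satisfies `tr(UᵀA) ≥ tr(WᵀA)` for every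
`W ∈ St_{m,r}`. -/
theorem stmt4 {m r : ℕ} (A Q : Matrix (Fin m) (Fin r) ℝ)
    (S : Matrix (Fin r) (Fin r) ℝ) (d : Fin r → ℝ)
    (hA : A.rank = r)
    (hQ : Qᵀ * Q = 1) (hS1 : Sᵀ * S = 1) (hS2 : S * Sᵀ = 1)
    (hd : ∀ i, 0 < d i) (hSVD : A = Q * Matrix.diagonal d * Sᵀ) :
    ∀ W : Matrix (Fin m) (Fin r) ℝ, Wᵀ * W = 1 →
      (Wᵀ * A).trace ≤ ((Q * Sᵀ)ᵀ * A).trace := by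
  intro W hW
  set B := W * S with hBdef
  have hB : Bᵀ * B = 1 := by
    have : Bᵀ * B = Sᵀ * (Wᵀ * W) * S := by
      simp [hBdef, Matrix.transpose_mul, Matrix.mul_assoc]
    rw [this, hW, Matrix.mul_one, hS1]
  -- LHS
  have hL : (Wᵀ * A).trace = ∑ i, (Bᵀ * Q) i i * d i := by
    have h1 : Wᵀ * A = (Wᵀ * Q * Matrix.diagonal d) * Sᵀ := by
      rw [hSVD]; simp only [Matrix.mul_assoc]
    rw [h1, Matrix.trace_mul_comm, ← Matrix.mul_assoc, ← Matrix.mul_assoc]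
    have h2 : Sᵀ * Wᵀ = Bᵀ := by simp [hBdef, Matrix.transpose_mul]
    rw [h2]
    simp [Matrix.trace, Matrix.diag, Matrix.mul_diagonal]
  -- RHS
  have hR : ((Q * Sᵀ)ᵀ * A).trace = ∑ i, d i := by
    have h1 : (Q * Sᵀ)ᵀ * A = S * (Qᵀ * Q) * (Matrix.diagonal d) * Sᵀ := by
      rw [hSVD]
      simp [Matrix.transpose_mul, Matrix.mul_assoc]
    rw [h1, hQ, Matrix.mul_one, Matrix.trace_mul_comm, ← Matrix.mul_assoc, hS1, Matrix.one_mul,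
      Matrix.trace_diagonal]
  rw [hL, hR]
  have key : ∀ i, (Bᵀ * Q) i i ≤ 1 := by
    intro i
    have hBi : ∑ k, B k i ^ 2 = 1 := by
      have := congrArg (fun M => M i i) hB
      simpa [Matrix.mul_apply, Matrix.one_apply, sq] using this
    have hQi : ∑ k, Q k i ^ 2 = 1 := by
      have := congrArg (fun M => M i i) hQ
      simpa [Matrix.mul_apply, Matrix.one_apply, sq] using this
    have hcs := Finset.sum_mul_sq_le_sq_mul_sq Finset.univ (fun k => B k i) (fun k => Q k i)
    rw [hBi, hQi, mul_one] at hcs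
    have : (Bᵀ * Q) i i = ∑ k, B k i * Q k i := by
      simp [Matrix.mul_apply, Matrix.transpose_apply]
    rw [this]
    nlinarith [hcs]
  calc ∑ i, (Bᵀ * Q) i i * d i ≤ ∑ i, 1 * d i := by
        apply Finset.sum_le_sum
        intro i _
        exact mul_le_mul_of_nonneg_right (key i) (hd i).le
    _ = ∑ i, d i := by simp
end

section
/- Let U ∈ St_{m,r} and V ∈ St_{n,r}. Then for any M ∈ ℝ^{m×n}, the symmetric matrix B = (UᵀMV + VᵀMᵀU)/2 minimizes ‖M − U B Vᵀ‖_F² over all symmetric matrices B ∈ ℝ^{r×r}. -/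
open Matrix

/-- Squared Frobenius norm. -/
def frobSq {m n : ℕ} (X : Matrix (Fin m) (Fin n) ℝ) : ℝ := ∑ i, ∑ j, (X i j) ^ 2

lemma frob_eq {m n : ℕ} (X : Matrix (Fin m) (Fin n) ℝ) :
    frobSq X = (Xᵀ * X).trace := by
  simp [frobSq, Matrix.trace, Matrix.mul_apply, Matrix.diag, sq]
  exact Finset.sum_comm

lemma frob_nonneg {m n : ℕ} (X : Matrix (Fin m) (Fin n) ℝ) : 0 ≤ frobSq X := by
  unfold frobSq; positivity

/-- Let `U ∈ St_{m,r}` and `V ∈ St_{n,r}`. Then for any `M ∈ ℝ^{m×n}`, the symmetric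
matrix `B = (UᵀMV + VᵀMᵀU)/2` minimizes `‖M − U B Vᵀ‖_F²` over all symmetric matrices
`B ∈ ℝ^{r×r}`. -/
theorem stmt5 {m n r : ℕ} (M : Matrix (Fin m) (Fin n) ℝ)
    (U : Matrix (Fin m) (Fin r) ℝ) (V : Matrix (Fin n) (Fin r) ℝ)
    (hU : Uᵀ * U = 1) (hV : Vᵀ * V = 1) :
    ∀ B' : Matrix (Fin r) (Fin r) ℝ, B'.IsSymm →
      frobSq (M - U * (((1 : ℝ) / 2) • (Uᵀ * M * V + Vᵀ * Mᵀ * U)) * Vᵀ) ≤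
        frobSq (M - U * B' * Vᵀ) := by
  intro B' hB'
  set A : Matrix (Fin r) (Fin r) ℝ := Uᵀ * M * V with hA
  set S : Matrix (Fin r) (Fin r) ℝ := ((1 : ℝ) / 2) • (Uᵀ * M * V + Vᵀ * Mᵀ * U) with hSdef
  have hAt : Aᵀ = Vᵀ * Mᵀ * U := by
    simp [hA, Matrix.transpose_mul, Matrix.mul_assoc]
  have hS : Sᵀ = S := by
    rw [hSdef, Matrix.transpose_smul, Matrix.transpose_add, ← hA, ← hAt,
      Matrix.transpose_transpose, add_comm, hA, hAt]
  -- key expansion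
  have key : ∀ B : Matrix (Fin r) (Fin r) ℝ,
      frobSq (M - U * B * Vᵀ) = frobSq M - 2 * (Aᵀ * B).trace + frobSq B := by
    intro B
    rw [frob_eq, frob_eq M, frob_eq B]
    have h1 : (M - U * B * Vᵀ)ᵀ * (M - U * B * Vᵀ) =
        Mᵀ * M - Mᵀ * (U * B * Vᵀ) - (V * Bᵀ * Uᵀ) * M + (V * Bᵀ * Uᵀ) * (U * B * Vᵀ) := by
      simp [Matrix.transpose_sub, Matrix.transpose_mul, Matrix.sub_mul, Matrix.mul_sub,
        Matrix.mul_assoc]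
      abel
    have t1 : (Mᵀ * (U * B * Vᵀ)).trace = (Aᵀ * B).trace := by
      rw [show Mᵀ * (U * B * Vᵀ) = (Mᵀ * U * B) * Vᵀ by simp only [Matrix.mul_assoc],
        Matrix.trace_mul_comm, hAt]
      simp only [Matrix.mul_assoc]
    have t2 : ((V * Bᵀ * Uᵀ) * M).trace = (Aᵀ * B).trace := by
      rw [show (V * Bᵀ * Uᵀ) * M = V * (Bᵀ * (Uᵀ * M)) by
          rw [Matrix.mul_assoc, Matrix.mul_assoc],
        ← Matrix.trace_mul_comm]
      rw [show Bᵀ * (Uᵀ * M) * V = Bᵀ * A by rw [hA, Matrix.mul_assoc, Matrix.mul_assoc]]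
      rw [← Matrix.trace_transpose (Bᵀ * A), Matrix.transpose_mul, Matrix.transpose_transpose]
    have t3 : ((V * Bᵀ * Uᵀ) * (U * B * Vᵀ)).trace = (Bᵀ * B).trace := by
      have : (V * Bᵀ * Uᵀ) * (U * B * Vᵀ) = V * (Bᵀ * B) * Vᵀ := by
        rw [show (V * Bᵀ * Uᵀ) * (U * B * Vᵀ) = V * Bᵀ * (Uᵀ * U) * B * Vᵀ by
          simp only [Matrix.mul_assoc], hU]
        simp [Matrix.mul_assoc]
      rw [this, show V * (Bᵀ * B) * Vᵀ = V * ((Bᵀ * B) * Vᵀ) by rw [Matrix.mul_assoc],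
        Matrix.trace_mul_comm, Matrix.mul_assoc, hV, Matrix.mul_one]
    rw [h1, Matrix.trace_add, Matrix.trace_sub, Matrix.trace_sub, t1, t2, t3]
    ring
  -- for symmetric B, ⟨A, B⟩ = ⟨S, B⟩
  have hg : ∀ B : Matrix (Fin r) (Fin r) ℝ, Bᵀ = B → (Aᵀ * B).trace = (Sᵀ * B).trace := by
    intro B hB
    have hAB : (A * B).trace = (Aᵀ * B).trace := by
      rw [← Matrix.trace_transpose (A * B), Matrix.transpose_mul, hB, Matrix.trace_mul_comm]
    rw [hS, hSdef, Matrix.smul_mul, Matrix.trace_smul, Matrix.add_mul, Matrix.trace_add,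
      ← hA, ← hAt, hAB]
    simp [smul_eq_mul]
    ring
  have hB't : B'ᵀ = B' := hB'
  rw [key, key, hg S hS, hg B' hB't]
  have hdiff : frobSq (M - U * B' * Vᵀ) - frobSq (M - U * S * Vᵀ) = frobSq (B' - S) := by
    rw [key, key, hg S hS, hg B' hB't, frob_eq (B' - S)]
    have : (B' - S)ᵀ * (B' - S) = B'ᵀ * B' - B'ᵀ * S - Sᵀ * B' + Sᵀ * S := by
      simp [Matrix.transpose_sub, Matrix.sub_mul, Matrix.mul_sub]
      abel
    rw [this, Matrix.trace_add, Matrix.trace_sub, Matrix.trace_sub]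
    have hts : (B'ᵀ * S).trace = (Sᵀ * B').trace := by
      rw [← Matrix.trace_transpose (B'ᵀ * S), Matrix.transpose_mul, Matrix.transpose_transpose]
    rw [hts, frob_eq B', frob_eq S]
    ring
  have := frob_nonneg (B' - S)
  rw [← hdiff] at this
  rw [key, key, hg S hS, hg B' hB't] at this
  linarith
end
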